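/- Let (P,≤,',M,R,0,1) be an operator residuated poset satisfying operator divisibility, with M(x,y) = L(U(x,y') ∪ {y}) and R(x,y) = L(U({x'} ∪ L(x,y))) for all x,y. Then (P,≤,',0,1) is a generalized orthomodular poset. -/
import Mathlib


variable {P : Type*}

/-- Lower cone of a set. -/
def lowerCone [Preorder P] (A : Set P) : Set P := {x | ∀ a ∈ A, x ≤ a}

/-- Upper cone of a set. -/
def upperCone [Preorder P] (A : Set P) : Set P := {x | ∀ a ∈ A, a ≤ x}

lemma mem_lowerCone' [Preorder P] {A : Set P} {x : P} :
    x ∈ lowerCone A ↔ ∀ a ∈ A, x ≤ a := Iff.rfl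

lemma mem_upperCone' [Preorder P] {A : Set P} {x : P} :
    x ∈ upperCone A ↔ ∀ a ∈ A, a ≤ x := Iff.rfl

lemma upper_lower_upper' [Preorder P] (S : Set P) :
    upperCone (lowerCone (upperCone S)) = upperCone S := by
  ext u
  constructor
  · intro hu s hs
    exact hu s (fun a ha => ha s hs)
  · intro hu z hz
    exact hz u hu

/-- An operator residuated poset satisfying operator divisibility, with
M(x,y) = L(U(x,y') ∪ {y}) and R(x,y) = L(U({x'} ∪ L(x,y))), is a generalized
orthomodular poset. -/
theorem op_residuated_is_gomp
    [PartialOrder P] [BoundedOrder P] (c : P → P)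
    (M R : P → P → Set P)
    (hanti : ∀ x y : P, x ≤ y → c y ≤ c x)
    (hadj : ∀ x y z : P, M x y ⊆ lowerCone {z} ↔ lowerCone {x} ⊆ R y z)
    (hR0 : ∀ x : P, R x ⊥ = lowerCone {c x})
    (hRxd : ∀ x : P, R x (c (c x)) = (Set.univ : Set P))
    (hRdx : ∀ x : P, R (c (c x)) x = (Set.univ : Set P))
    (hdiv : ∀ x y : P, x ≤ y → lowerCone ({y} ∪ upperCone (R y x)) = lowerCone {x})
    (hM : ∀ x y : P, M x y = lowerCone (upperCone {x, c y} ∪ {y}))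
    (hRdef : ∀ x y : P, R x y = lowerCone (upperCone ({c x} ∪ lowerCone {x, y}))) :
    (∀ x : P, c (c x) = x) ∧
    (∀ x : P, lowerCone {x, c x} = {(⊥ : P)}) ∧
    (∀ x : P, upperCone {x, c x} = {(⊤ : P)}) ∧
    (∀ x y : P, x ≤ y → upperCone {y} = upperCone ({x} ∪ lowerCone {c x, y})) := by
  -- any element of M ⊤ y is below every z with R y z = univ; and y ∈ M ⊤ y
  have hmemM : ∀ y : P, y ∈ M ⊤ y := by
    intro y
    rw [hM]
    intro a ha
    rcases ha with ha | ha
    · exact le_top.trans (ha ⊤ (Set.mem_insert _ _))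
    · rw [Set.mem_singleton_iff.mp ha]
  -- involution
  have hinv : ∀ x : P, c (c x) = x := by
    intro x
    have h1 : M ⊤ x ⊆ lowerCone {c (c x)} := by
      rw [hadj, hRxd]
      exact fun z _ => Set.mem_univ z
    have h2 : M ⊤ (c (c x)) ⊆ lowerCone {x} := by
      rw [hadj, hRdx]
      exact fun z _ => Set.mem_univ z
    exact le_antisymm (h2 (hmemM _) x rfl) (h1 (hmemM _) (c (c x)) rfl)
  -- meet condition
  have hmeet : ∀ x : P, lowerCone {x, c x} = {(⊥ : P)} := by
    intro x
    ext z
    constructor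
    · intro hz
      have hzx : z ≤ x := hz x (Set.mem_insert _ _)
      have hzcx : z ≤ c x := hz (c x) (Set.mem_insert_of_mem _ rfl)
      have hsub : M z x ⊆ lowerCone {(⊥ : P)} := by
        rw [hadj, hR0]
        intro w hw
        exact fun a ha => (hw z rfl).trans (by rw [Set.mem_singleton_iff.mp ha]; exact hzcx)
      have hzmem : z ∈ M z x := by
        rw [hM]
        intro a ha
        rcases ha with ha | ha
        · exact ha z (Set.mem_insert _ _)
        · rw [Set.mem_singleton_iff.mp ha]; exact hzx
      have := hsub hzmem ⊥ rfl
      exact Set.mem_singleton_iff.mpr (le_bot_iff.mp this)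
    · intro hz
      rw [Set.mem_singleton_iff.mp hz]
      exact fun a _ => bot_le
  have hcbot : c (⊥ : P) = ⊤ := by
    have : c (c ⊤) ≤ c ⊥ := hanti ⊥ (c ⊤) bot_le
    rw [hinv] at this
    exact le_antisymm le_top this
  -- join condition
  have hjoin : ∀ x : P, upperCone {x, c x} = {(⊤ : P)} := by
    intro x
    ext u
    constructor
    · intro hu
      have h1 : c u ≤ c x := hanti x u (hu x (Set.mem_insert _ _))
      have h2 : c u ≤ x := by
        have := hanti (c x) u (hu (c x) (Set.mem_insert_of_mem _ rfl))
        rwa [hinv] at this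
      have hmem : c u ∈ lowerCone {x, c x} := by
        intro a ha
        rcases ha with ha | ha
        · rw [ha]; exact h2
        · rw [Set.mem_singleton_iff.mp ha]; exact h1
      rw [hmeet] at hmem
      have : c (c u) = c ⊥ := by rw [Set.mem_singleton_iff.mp hmem]
      rw [hinv, hcbot] at this
      exact Set.mem_singleton_iff.mpr this
    · intro hu
      rw [Set.mem_singleton_iff.mp hu]
      exact fun a _ => le_top
  refine ⟨hinv, hmeet, hjoin, ?_⟩
  -- orthomodularity
  intro x y hxy
  -- key computation: U(R (c x) (c y)) = U {x, c y}
  have hUR : upperCone (R (c x) (c y)) = upperCone {x, c y} := by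
    rw [hRdef, hinv, upper_lower_upper']
    ext u
    constructor
    · intro hu a ha
      rcases ha with ha | ha
      · rw [ha]; exact hu x (Or.inl rfl)
      · rw [Set.mem_singleton_iff.mp ha]
        refine hu (c y) (Or.inr ?_)
        intro b hb
        rcases hb with hb | hb
        · rw [hb]; exact hanti x y hxy
        · rw [Set.mem_singleton_iff.mp hb]
    · intro hu a ha
      rcases ha with ha | ha
      · rw [Set.mem_singleton_iff.mp ha]; exact hu x (Set.mem_insert _ _)
      · exact (ha (c y) (Set.mem_insert_of_mem _ rfl)).trans
          (hu (c y) (Set.mem_insert_of_mem _ rfl))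
  have hkey : lowerCone ({c x} ∪ upperCone {x, c y}) = lowerCone {c y} := by
    rw [← hUR]
    exact hdiv (c y) (c x) (hanti x y hxy)
  ext u
  constructor
  · intro hu a ha
    have hyu : y ≤ u := hu y rfl
    rcases ha with ha | ha
    · rw [Set.mem_singleton_iff.mp ha]; exact hxy.trans hyu
    · exact (ha y (Set.mem_insert_of_mem _ rfl)).trans hyu
  · intro hu b hb
    rw [Set.mem_singleton_iff.mp hb]
    have hxu : x ≤ u := hu x (Or.inl rfl)
    have hcu : c u ∈ lowerCone ({c x} ∪ upperCone {x, c y}) := by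
      intro a ha
      rcases ha with ha | ha
      · rw [Set.mem_singleton_iff.mp ha]; exact hanti x u hxu
      · -- a ∈ upperCone {x, c y}
        have hca : c a ∈ lowerCone {c x, y} := by
          intro b' hb'
          rcases hb' with hb' | hb'
          · rw [hb']; exact hanti x a (ha x (Set.mem_insert _ _))
          · rw [Set.mem_singleton_iff.mp hb']
            have := hanti (c y) a (ha (c y) (Set.mem_insert_of_mem _ rfl))
            rwa [hinv] at this
        have hcau : c a ≤ u := hu (c a) (Or.inr hca)
        have := hanti (c a) u hcau
        rwa [hinv] at this
    have hcucy : c u ≤ c y := by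
      rw [hkey] at hcu
      exact hcu (c y) rfl
    have := hanti (c u) (c y) hcucy
    rwa [hinv, hinv] at this
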